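/- Let φ be a propositional formula over a finite variable set V and let x ∈ V. Then x is free for negation in φ if and only if for every valuation ν with ν ⊨ φ and ν x = true there exists a set S ⊆ V with x ∈ S such that ν[S↦0] ⊨ φ. (This is the semantic content of the tautology (φ ∧ x) ⇒ ⋁_{S ⊆ V, x ∈ S} φ[S↦0].) -/

import Mathlib

variable {V : Type*} [Fintype V]

/-- Pointwise order on valuations: `ν' ≤ ν` iff every variable true in `ν'` is true in `ν`. -/
def VLE (ν' ν : V → Bool) : Prop := ∀ x, ν' x = true → ν x = true

/-- `ν` is a minimal model of `φ`: it is a model and no strictly smaller valuation is a model. -/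
def IsMinimalModel (φ : (V → Bool) → Prop) (ν : V → Bool) : Prop :=
  φ ν ∧ ¬ ∃ ν', VLE ν' ν ∧ ν' ≠ ν ∧ φ ν'

/-- `φ ⊨_min ψ`: every minimal model of `φ` satisfies `ψ`. -/
def EntailsMin (φ ψ : (V → Bool) → Prop) : Prop :=
  ∀ ν, IsMinimalModel φ ν → ψ ν

/-- `ν[S↦0]`: the valuation agreeing with `ν` outside `S` and assigning `false` on `S`. -/
noncomputable def setZero (ν : V → Bool) (S : Set V) : V → Bool :=
  fun x => @ite _ (x ∈ S) (Classical.propDecidable _) false (ν x)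

/-- `x` is free for negation in `φ`: every minimal model of `φ` assigns `false` to `x`. -/
def FreeForNegation (φ : (V → Bool) → Prop) (x : V) : Prop :=
  ∀ ν, IsMinimalModel φ ν → ν x = false
/-! Valuations over a finite set are well-founded under `≤`, so every model of `φ` lies above a
minimal one, and a valuation `μ ≤ ν` is `ν[S↦0]` for `S` the set of variables `μ` makes false.
Hence every minimal model falsifies `x` exactly when every model making `x` true can be lowered
to a model by zeroing a set of variables containing `x`. -/

section

variable {V : Type*}

theorem vle_iff_le {ν' ν : V → Bool} : VLE ν' ν ↔ ν' ≤ ν := by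
  simp only [VLE, Pi.le_def, Bool.le_iff_imp]

theorem isMinimalModel_iff_minimal {φ : (V → Bool) → Prop} {ν : V → Bool} :
    IsMinimalModel φ ν ↔ Minimal φ ν := by
  simp only [IsMinimalModel, vle_iff_le, minimal_iff_forall_lt, lt_iff_le_and_ne]
  aesop

theorem exists_isMinimalModel_vle [Finite V] {φ : (V → Bool) → Prop} {ν : V → Bool}
    (hν : φ ν) : ∃ μ, VLE μ ν ∧ IsMinimalModel φ μ := by
  obtain ⟨μ, hμν, hμ⟩ := exists_minimal_le_of_wellFoundedLT φ ν hν
  exact ⟨μ, vle_iff_le.2 hμν, isMinimalModel_iff_minimal.2 hμ⟩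

theorem setZero_of_mem {ν : V → Bool} {S : Set V} {y : V} (hy : y ∈ S) :
    setZero ν S y = false := by
  simp [setZero, hy]

theorem setZero_vle (ν : V → Bool) (S : Set V) : VLE (setZero ν S) ν := by
  intro y hy
  by_cases h : y ∈ S <;> simp_all [setZero]

theorem setZero_ne_self {ν : V → Bool} {S : Set V} {x : V} (hx : ν x = true) (hxS : x ∈ S) :
    setZero ν S ≠ ν := fun h => by
  simpa [setZero_of_mem hxS, hx] using congrFun h x

theorem setZero_eq_of_vle {μ ν : V → Bool} (h : VLE μ ν) :
    setZero ν {y | μ y = false} = μ := by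
  funext y
  cases hμ : μ y
  · exact setZero_of_mem hμ
  · simp [setZero, hμ, h y hμ]

end

theorem stmt_6 (φ : (V → Bool) → Prop) (x : V) :
    FreeForNegation φ x ↔
      ∀ ν : V → Bool, φ ν → ν x = true →
        ∃ S : Set V, x ∈ S ∧ φ (setZero ν S) := by
  constructor
  · intro hfree ν hν _
    obtain ⟨μ, hμν, hμ⟩ := exists_isMinimalModel_vle hν
    refine ⟨{y | μ y = false}, hfree μ hμ, ?_⟩
    rw [setZero_eq_of_vle hμν]
    exact hμ.1
  · intro h ν hν
    rw [← Bool.not_eq_true]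
    intro hx
    obtain ⟨S, hxS, hS⟩ := h ν hν.1 hx
    exact hν.2 ⟨setZero ν S, setZero_vle ν S, setZero_ne_self hx hxS, hS⟩
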